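/- arXiv:1510.05914 — 5 statements merged into one kernel-verified Lean document; each statement's English description precedes it below -/
import Mathlib

section
/- The sum of reciprocals of all powerful numbers converges. -/
def IsPowerful (n : ℕ) : Prop :=
  0 < n ∧ ∀ p : ℕ, p.Prime → p ∣ n → p ^ 2 ∣ n

/-! Writing a powerful number as `b ^ 2 * a` with `a` squarefree forces `a ∣ b`, so every powerful
number has the form `c ^ 2 * a ^ 3`. Hence the sum of their reciprocals is dominated by
`(∑ 1 / c ^ 2) * (∑ 1 / a ^ 3) < ∞`. -/

theorem Squarefree.dvd_of_isPowerful_sq_mul {a b : ℕ} (ha : Squarefree a)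
    (h : IsPowerful (b ^ 2 * a)) : a ∣ b := by
  have hb : b ≠ 0 := by rintro rfl; simp [IsPowerful] at h
  rw [← Nat.prod_primeFactors_of_squarefree ha, Nat.prod_primeFactors_dvd_iff hb]
  intro p hp
  obtain ⟨hp, hpa, -⟩ := Nat.mem_primeFactors.1 hp
  have hpb : p ^ 1 ∣ b ^ 2 := ha.pow_dvd_of_squarefree_of_pow_succ_dvd_mul_left hp.prime
    (h.2 p hp (dvd_mul_of_dvd_right hpa _))
  exact Nat.mem_primeFactors.2 ⟨hp, hp.dvd_of_dvd_pow (by simpa using hpb), hb⟩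

theorem IsPowerful.exists_sq_mul_cube {n : ℕ} (hn : IsPowerful n) :
    ∃ a b : ℕ, a ^ 2 * b ^ 3 = n := by
  obtain ⟨a, b, -, -, rfl, ha⟩ := Nat.sq_mul_squarefree_of_pos hn.1
  obtain ⟨c, rfl⟩ := ha.dvd_of_isPowerful_sq_mul hn
  exact ⟨c, a, by ring⟩

theorem Summable.subtype_of_subset_range {α β : Type*} {f : α → ℝ} {g : β → α} {s : Set α}
    (hf : Summable (f ∘ g)) (hs : s ⊆ Set.range g) : Summable fun x : s ↦ f x := by
  choose σ hσ using fun x : s ↦ hs x.2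
  have hσ_inj : σ.Injective := fun x y hxy ↦ Subtype.ext <| by rw [← hσ x, ← hσ y, hxy]
  exact (hf.comp_injective hσ_inj).congr fun x ↦ by simp [hσ]

theorem summable_one_div_sq_mul_cube :
    Summable fun q : ℕ × ℕ ↦ (1 : ℝ) / ((q.1 ^ 2 * q.2 ^ 3 : ℕ) : ℝ) := by
  have h2 := Real.summable_one_div_nat_pow.2 one_lt_two
  have h3 := Real.summable_one_div_nat_pow.2 (by norm_num : 1 < 3)
  refine (h2.mul_of_nonneg h3 (fun _ ↦ by positivity) fun _ ↦ by positivity).congr fun q ↦ ?_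
  push_cast
  exact one_div_mul_one_div _ _

theorem stmt_4 : Summable (fun a : {n : ℕ // IsPowerful n} => (1 : ℝ) / (a : ℕ)) :=
  Summable.subtype_of_subset_range (f := fun n : ℕ ↦ (1 : ℝ) / n) (s := {n | IsPowerful n})
    summable_one_div_sq_mul_cube fun _ hn ↦ by
      obtain ⟨a, b, hab⟩ := IsPowerful.exists_sq_mul_cube hn
      exact ⟨(a, b), hab⟩
end

section
/- If S is a set of positive integers containing 1, then the set of exponentially S-numbers has a natural density equal to ∏_p (1 + ∑_{i≥2} (u(i) - u(i-1))/p^i), where u is the characteristic function of S and the product runs over all primes. -/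
def IsExpSNumber (S : Set ℕ) (N : ℕ) : Prop :=
  0 < N ∧ ∀ p : ℕ, p.Prime → p ∣ N → N.factorization p ∈ S

def HasDensity (A : Set ℕ) (d : ℝ) : Prop :=
  Filter.Tendsto (fun N : ℕ => ({n : ℕ | n ∈ A ∧ n ≤ N}.ncard : ℝ) / N)
    Filter.atTop (nhds d)

/-!
The indicator `f` of the exponentially `S`-numbers is multiplicative with `f (p ^ k) = u k` for
`k ≥ 1`, so `g = f * μ` is multiplicative with `g p = u 1 - 1 = 0` and
`g (p ^ k) = u k - u (k - 1)` for `k ≥ 2`. Thus `|g| ≤ 1` and `g` lives on powerful numbers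
`a ^ 2 * b ^ 3`, whence `∑ |g d| / d < ∞`. Since `f = g * ζ`, the count up to `N` is
`∑_{d ≤ N} g d * ⌊N / d⌋`, and dominated convergence gives the density `∑ g d / d`, which is the
Euler product `∏_p ∑_e g (p ^ e) / p ^ e` of the statement.
-/

open Finset Filter Topology ArithmeticFunction
open scoped ArithmeticFunction.zeta ArithmeticFunction.Moebius

namespace Nat

def Powerful (n : ℕ) : Prop := ∀ p ∈ n.primeFactors, 2 ≤ n.factorization p

-- Each exponent `e ≥ 2` splits as `2 * ((e - 3 * (e % 2)) / 2) + 3 * (e % 2)`.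
theorem Powerful.exists_sq_mul_cube {n : ℕ} (hn : n.Powerful) : ∃ a b, a ^ 2 * b ^ 3 = n := by
  rcases eq_or_ne n 0 with rfl | hn0
  · exact ⟨0, 0, rfl⟩
  refine ⟨n.factorization.prod fun p e => p ^ ((e - 3 * (e % 2)) / 2),
    n.factorization.prod fun p e => p ^ (e % 2), ?_⟩
  conv_rhs => rw [← Nat.prod_factorization_pow_eq_self hn0]
  simp only [Finsupp.prod, ← Finset.prod_pow, ← Finset.prod_mul_distrib, ← pow_mul, ← pow_add]
  refine Finset.prod_congr rfl fun p hp => congrArg (p ^ ·) ?_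
  have := hn p (by rwa [← Nat.support_factorization])
  omega

theorem summable_indicator_powerful_inv :
    Summable ({n : ℕ | n.Powerful}.indicator fun n => (n : ℝ)⁻¹) := by
  rw [← summable_subtype_iff_indicator]
  choose a b hab using fun n : {n : ℕ | n.Powerful} => n.2.exists_sq_mul_cube
  have hinj : Function.Injective fun n => (a n, b n) := fun m n h => by
    simp only [Prod.mk.injEq] at h
    exact Subtype.ext (by rw [← hab m, ← hab n, h.1, h.2])
  have hsum : Summable fun q : ℕ × ℕ => ((q.1 : ℝ) ^ 2)⁻¹ * ((q.2 : ℝ) ^ 3)⁻¹ :=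
    (Real.summable_nat_pow_inv.2 (by norm_num)).mul_of_nonneg
      (Real.summable_nat_pow_inv.2 (by norm_num)) (fun _ => by positivity) (fun _ => by positivity)
  refine (hsum.comp_injective hinj).congr fun n => ?_
  simp [← hab n, mul_comm]

end Nat

theorem summable_abs_div_of_powerful {g : ℕ → ℝ} {C : ℝ} (hbound : ∀ n, |g n| ≤ C)
    (hsupp : ∀ n, g n ≠ 0 → n.Powerful) : Summable fun n => |g n| / n := by
  refine (Nat.summable_indicator_powerful_inv.mul_left C).of_nonneg_of_le
    (fun n => by positivity) fun n => ?_
  by_cases hn : n.Powerful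
  · simpa [hn, div_eq_mul_inv] using mul_le_mul_of_nonneg_right (hbound n) (by positivity)
  · simp [hn, not_imp_comm.1 (hsupp n) hn]

theorem natCast_div_div_le_inv (N d : ℕ) : ((N / d : ℕ) : ℝ) / N ≤ (d : ℝ)⁻¹ := by
  rcases eq_or_ne N 0 with rfl | hN
  · simp
  calc ((N / d : ℕ) : ℝ) / N ≤ (N / d : ℝ) / N := by gcongr; exact Nat.cast_div_le
    _ = (d : ℝ)⁻¹ := by field_simp

theorem tendsto_natCast_div_div_atTop (d : ℕ) :
    Tendsto (fun N : ℕ => ((N / d : ℕ) : ℝ) / N) atTop (𝓝 (d : ℝ)⁻¹) := by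
  rcases eq_or_ne d 0 with rfl | hd
  · simp
  have hd' : (0 : ℝ) < d := by positivity
  have h := (tendsto_nat_floor_div_atTop (R := ℝ)).comp
    ((tendsto_natCast_atTop_atTop (R := ℝ)).atTop_div_const hd')
  refine (by simpa using h.mul_const (d : ℝ)⁻¹ : Tendsto _ atTop _).congr' ?_
  filter_upwards [eventually_ne_atTop 0] with N hN
  simp only [Nat.floor_div_eq_div]
  field_simp

namespace ArithmeticFunction

theorem IsMultiplicative.abs_le_one {g : ArithmeticFunction ℝ} (hg : g.IsMultiplicative)
    (h : ∀ p k, p.Prime → |g (p ^ k)| ≤ 1) (n : ℕ) : |g n| ≤ 1 := by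
  rcases eq_or_ne n 0 with rfl | hn
  · simp
  rw [hg.multiplicative_factorization g hn, Finsupp.prod, Finset.abs_prod]
  exact Finset.prod_le_one (fun _ _ => abs_nonneg _)
    fun p hp => h p _ (Nat.prime_of_mem_primeFactors (by rwa [← Nat.support_factorization]))

theorem IsMultiplicative.powerful_of_ne_zero {R : Type*} [CommMonoidWithZero R]
    {g : ArithmeticFunction R} (hg : g.IsMultiplicative) (h : ∀ p, p.Prime → g p = 0) {n : ℕ}
    (hn : g n ≠ 0) : n.Powerful := by
  have hn0 : n ≠ 0 := by rintro rfl; exact hn g.map_zero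
  intro p hp
  by_contra! hlt
  have hp1 : n.factorization p = 1 := by
    have := Nat.pos_of_ne_zero (Finsupp.mem_support_iff.1 (by rwa [Nat.support_factorization]))
    omega
  refine hn ?_
  rw [hg.multiplicative_factorization g hn0, Finsupp.prod]
  exact Finset.prod_eq_zero (by rwa [Nat.support_factorization])
    (by rw [hp1, pow_one, h p (Nat.prime_of_mem_primeFactors hp)])

theorem mul_zeta_apply_prime_pow_succ {R : Type*} [Semiring R] (f : ArithmeticFunction R)
    {p : ℕ} (hp : p.Prime) (k : ℕ) : (f * ζ) (p ^ (k + 1)) = (f * ζ) (p ^ k) + f (p ^ (k + 1)) := by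
  simp only [coe_mul_zeta_apply, Nat.sum_divisors_prime_pow hp, Finset.sum_range_succ _ (k + 1)]

theorem mul_moebius_mul_zeta {R : Type*} [Ring R] (f : ArithmeticFunction R) :
    f * (μ : ArithmeticFunction R) * ζ = f := by
  rw [mul_assoc, coe_moebius_mul_coe_zeta, mul_one]

theorem mul_moebius_apply_prime_pow_succ {R : Type*} [Ring R] (f : ArithmeticFunction R)
    {p : ℕ} (hp : p.Prime) (k : ℕ) :
    (f * (μ : ArithmeticFunction R)) (p ^ (k + 1)) = f (p ^ (k + 1)) - f (p ^ k) := by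
  have := mul_zeta_apply_prime_pow_succ (f * (μ : ArithmeticFunction R)) hp k
  rw [mul_moebius_mul_zeta] at this
  rw [this, add_sub_cancel_left]

theorem tendsto_sum_mul_zeta_div (g : ArithmeticFunction ℝ) (hg : Summable fun d => |g d| / d) :
    Tendsto (fun N : ℕ => (∑ n ∈ Ioc 0 N, (g * ζ) n) / N) atTop (𝓝 (∑' d, g d / d)) := by
  have hsum (N : ℕ) :
      (∑ n ∈ Ioc 0 N, (g * ζ) n) / N = ∑' d, g d * (((N / d : ℕ) : ℝ) / N) := by
    rw [sum_Ioc_mul_zeta_eq_sum, Finset.sum_div, tsum_eq_sum (s := Ioc 0 N)]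
    · simp_rw [mul_div_assoc]
    · intro d hd
      rcases eq_or_ne d 0 with rfl | hd0
      · simp
      · simp [Nat.div_eq_of_lt (by simp_all [Nat.pos_iff_ne_zero] : N < d)]
  simp_rw [hsum, div_eq_mul_inv (g _)]
  refine tendsto_tsum_of_dominated_convergence hg
    (fun d => (tendsto_natCast_div_div_atTop d).const_mul (g d))
    (Eventually.of_forall fun N d => ?_)
  rw [norm_mul, Real.norm_eq_abs, Real.norm_of_nonneg (by positivity)]
  simpa [div_eq_mul_inv] using
    mul_le_mul_of_nonneg_left (natCast_div_div_le_inv N d) (abs_nonneg (g d))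

theorem IsMultiplicative.tprod_tsum_prime_pow_div {g : ArithmeticFunction ℝ}
    (hg : g.IsMultiplicative) (hsum : Summable fun d => |g d| / d) :
    ∏' p : Nat.Primes, ∑' e, g (p ^ e) / (p : ℝ) ^ e = ∑' d, g d / d := by
  have := EulerProduct.eulerProduct_tprod (f := fun d => g d / d) (by simp [hg.map_one])
    (fun {m n} h => by simp [hg.map_mul_of_coprime h]; ring) (by simpa [abs_div] using hsum)
    (by simp)
  simpa using this

theorem tsum_prime_pow_div_eq_one_add {g : ArithmeticFunction ℝ}
    (hsum : Summable fun d => |g d| / d) (h1 : g 1 = 1) {p : ℕ} (hp : p.Prime) (hgp : g p = 0) :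
    ∑' e, g (p ^ e) / (p : ℝ) ^ e = 1 + ∑' i, g (p ^ (i + 2)) / (p : ℝ) ^ (i + 2) := by
  have hsum' : Summable fun e => g (p ^ e) / (p : ℝ) ^ e := by
    have := (Summable.of_norm (by simpa [abs_div] using hsum) :
      Summable fun d => g d / d).comp_injective (Nat.pow_right_injective hp.two_le)
    simpa [Function.comp_def] using this
  rw [← hsum'.sum_add_tsum_nat_add 2]
  simp [Finset.sum_range_succ, h1, hgp]

end ArithmeticFunction

section ExpSNumber

variable {S : Set ℕ}

theorem not_isExpSNumber_zero : ¬IsExpSNumber S 0 := fun h => h.1.ne rfl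

theorem isExpSNumber_one : IsExpSNumber S 1 :=
  ⟨one_pos, fun _ hp hd => absurd (Nat.eq_one_of_dvd_one hd) hp.ne_one⟩

theorem isExpSNumber_prime_pow_iff {p k : ℕ} (hp : p.Prime) (hk : k ≠ 0) :
    IsExpSNumber S (p ^ k) ↔ k ∈ S := by
  have hfac : (p ^ k).factorization p = k := by simp [hp.factorization_pow]
  refine ⟨fun h => hfac ▸ h.2 p hp (dvd_pow_self p hk), fun hkS => ⟨pow_pos hp.pos k, ?_⟩⟩
  rintro q hq hd
  rwa [(Nat.prime_dvd_prime_iff_eq hq hp).1 (hq.dvd_of_dvd_pow hd), hfac]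

theorem isExpSNumber_mul_iff {m n : ℕ} (hmn : m.Coprime n) (hm : m ≠ 0) (hn : n ≠ 0) :
    IsExpSNumber S (m * n) ↔ IsExpSNumber S m ∧ IsExpSNumber S n := by
  have hm' {p} (hp : p.Prime) (hd : p ∣ m) : (m * n).factorization p = m.factorization p := by
    rw [Nat.factorization_mul_apply_of_coprime hmn, Nat.factorization_eq_zero_of_not_dvd
      ((hp.coprime_iff_not_dvd).1 (hmn.coprime_dvd_left hd)), add_zero]
  have hn' {p} (hp : p.Prime) (hd : p ∣ n) : (m * n).factorization p = n.factorization p := by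
    rw [Nat.factorization_mul_apply_of_coprime hmn, Nat.factorization_eq_zero_of_not_dvd
      ((hp.coprime_iff_not_dvd).1 (hmn.symm.coprime_dvd_left hd)), zero_add]
  refine ⟨fun ⟨_, h⟩ => ⟨⟨Nat.pos_of_ne_zero hm, fun p hp hd => ?_⟩,
    ⟨Nat.pos_of_ne_zero hn, fun p hp hd => ?_⟩⟩, ?_⟩
  · exact hm' hp hd ▸ h p hp (hd.mul_right n)
  · exact hn' hp hd ▸ h p hp (hd.mul_left m)
  rintro ⟨⟨-, hS⟩, ⟨-, hT⟩⟩
  refine ⟨Nat.pos_of_ne_zero (mul_ne_zero hm hn), fun p hp hd => ?_⟩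
  rcases hp.dvd_mul.1 hd with hd | hd
  · exact hm' hp hd ▸ hS p hp hd
  · exact hn' hp hd ▸ hT p hp hd

noncomputable def expSIndicator (S : Set ℕ) : ArithmeticFunction ℝ :=
  ⟨{n | IsExpSNumber S n}.indicator 1,
    Set.indicator_of_notMem (s := {n | IsExpSNumber S n}) not_isExpSNumber_zero 1⟩

theorem expSIndicator_apply (n : ℕ) :
    expSIndicator S n = {n | IsExpSNumber S n}.indicator 1 n := rfl

theorem expSIndicator_mem_Icc (n : ℕ) : expSIndicator S n ∈ Set.Icc 0 1 := by
  classical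
  rw [expSIndicator_apply, Set.indicator_apply]
  split_ifs <;> simp

theorem expSIndicator_apply_prime_pow {p k : ℕ} (hp : p.Prime) (hk : k ≠ 0) :
    expSIndicator S (p ^ k) = S.indicator (fun _ => 1) k := by
  classical
  simp [expSIndicator_apply, Set.indicator_apply, isExpSNumber_prime_pow_iff hp hk]

theorem isMultiplicative_expSIndicator : (expSIndicator S).IsMultiplicative := by
  refine ArithmeticFunction.IsMultiplicative.iff_ne_zero.2
    ⟨by simp [expSIndicator_apply, isExpSNumber_one], fun {m n} hm hn hmn => ?_⟩
  classical
  simp [expSIndicator_apply, Set.indicator_apply, isExpSNumber_mul_iff hmn hm hn, ite_and]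
  split_ifs <;> rfl

theorem ncard_isExpSNumber_le (N : ℕ) :
    ({n | n ∈ {n | IsExpSNumber S n} ∧ n ≤ N}.ncard : ℝ) = ∑ n ∈ Ioc 0 N, expSIndicator S n := by
  classical
  have hset : {n | n ∈ {n | IsExpSNumber S n} ∧ n ≤ N} = ↑{n ∈ Ioc 0 N | IsExpSNumber S n} := by
    ext n
    simp only [Set.mem_ofPred_eq, coe_filter, mem_Ioc]
    exact ⟨fun h => ⟨⟨h.1.1, h.2⟩, h.1⟩, fun h => ⟨h.2, h.1.2⟩⟩
  rw [hset, Set.ncard_coe_finset]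
  simp [expSIndicator_apply, Set.indicator_apply]

end ExpSNumber

section ExpSMoebius

variable {S : Set ℕ}

noncomputable abbrev expSMoebius (S : Set ℕ) : ArithmeticFunction ℝ := expSIndicator S * μ

theorem expSMoebius_mul_zeta : expSMoebius S * ζ = expSIndicator S :=
  mul_moebius_mul_zeta _

theorem isMultiplicative_expSMoebius : (expSMoebius S).IsMultiplicative :=
  isMultiplicative_expSIndicator.mul isMultiplicative_moebius.intCast

theorem expSMoebius_apply_prime (h1 : 1 ∈ S) {p : ℕ} (hp : p.Prime) : expSMoebius S p = 0 := by
  rw [← pow_one p, mul_moebius_apply_prime_pow_succ _ hp 0,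
    expSIndicator_apply_prime_pow hp (by omega), pow_zero, isMultiplicative_expSIndicator.map_one,
    Set.indicator_of_mem h1, sub_self]

theorem expSMoebius_apply_prime_pow_add_two {p : ℕ} (hp : p.Prime) (i : ℕ) :
    expSMoebius S (p ^ (i + 2)) =
      S.indicator (fun _ => 1) (i + 2) - S.indicator (fun _ => 1) (i + 1) := by
  rw [mul_moebius_apply_prime_pow_succ _ hp, expSIndicator_apply_prime_pow hp (by omega),
    expSIndicator_apply_prime_pow hp (by omega)]

theorem abs_expSMoebius_le_one (n : ℕ) : |expSMoebius S n| ≤ 1 := by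
  refine isMultiplicative_expSMoebius.abs_le_one (fun p k hp => ?_) n
  rcases k with _ | k
  · simp [isMultiplicative_expSMoebius.map_one]
  rw [mul_moebius_apply_prime_pow_succ _ hp, abs_sub_le_iff]
  have h₁ := expSIndicator_mem_Icc (S := S) (p ^ (k + 1))
  have h₀ := expSIndicator_mem_Icc (S := S) (p ^ k)
  constructor <;> linarith [h₀.1, h₀.2, h₁.1, h₁.2]

theorem summable_abs_expSMoebius_div (h1 : 1 ∈ S) :
    Summable fun d => |expSMoebius S d| / d :=
  summable_abs_div_of_powerful abs_expSMoebius_le_one fun _ =>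
    isMultiplicative_expSMoebius.powerful_of_ne_zero fun _ => expSMoebius_apply_prime h1

end ExpSMoebius

theorem stmt_9 (S : Set ℕ) (h1 : 1 ∈ S)
    (u : ℕ → ℝ) (hu : ∀ i, u i = Set.indicator S (fun _ => (1 : ℝ)) i) :
    HasDensity {N : ℕ | IsExpSNumber S N}
      (∏' p : Nat.Primes, (1 + ∑' i : ℕ, (u (i + 2) - u (i + 1)) / (p : ℝ) ^ (i + 2))) := by
  have hsum := summable_abs_expSMoebius_div h1
  have hdensity : HasDensity {N | IsExpSNumber S N} (∑' d, expSMoebius S d / d) := by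
    simp_rw [HasDensity, ncard_isExpSNumber_le, ← expSMoebius_mul_zeta]
    exact tendsto_sum_mul_zeta_div _ hsum
  convert hdensity using 1
  rw [← isMultiplicative_expSMoebius.tprod_tsum_prime_pow_div hsum]
  refine tprod_congr fun p => ?_
  rw [tsum_prime_pow_div_eq_one_add hsum isMultiplicative_expSMoebius.map_one p.prop
    (expSMoebius_apply_prime h1 p.prop)]
  simp [hu, expSMoebius_apply_prime_pow_add_two p.prop]
end

section
/- For the sequence A with Sₙ = {1, 2, ..., n}, the density of exponentially A-numbers equals ∏_{n≥1} (1 − pₙ^{−(n+1)}), where pₙ is the n-th prime; in particular this product converges to a positive real number. -/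
/-- `nthPrime n` is the `n`-th prime, `1`-indexed: `nthPrime 1 = 2`. -/
noncomputable def nthPrime (n : ℕ) : ℕ := Nat.nth Nat.Prime (n - 1)

/-!
The condition on `N` says that no `q m = p_{m+1}^{m+2}` divides `N`; these `q m` are pairwise
coprime and `∑ 1/q m` converges. Sieve `(0, x]` by `q 0, …, q (K-1)`: by coprimality, the
survivors divisible by `q K` are `q K` times the survivors in `(0, x / q K]`, so by induction
the number of survivors is `x ∏_{m<K} (1 - 1/q m)` up to an error below `2^K`. The remaining
`q m` remove at most `x ∑_{m≥K} 1/q m` further integers. Letting `x → ∞` and then `K → ∞`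
gives the density; the product is positive because `∑ log (1 - 1/q m)` converges.
-/

open Finset Filter Topology Function

theorem Filter.Tendsto.of_forall_eventually_abs_sub_le {α : Type*} {l : Filter α}
    {a : α → ℝ} {b δ : ℕ → ℝ} {L : ℝ} (hb : Tendsto b atTop (𝓝 L))
    (hδ : Tendsto δ atTop (𝓝 0)) (h : ∀ K, ∀ᶠ x in l, |a x - b K| ≤ δ K) :
    Tendsto a l (𝓝 L) := by
  rw [Metric.tendsto_nhds]
  intro ε hε
  obtain ⟨K, hbK, hδK⟩ := ((Metric.tendsto_nhds.1 hb (ε / 2) (by positivity)).and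
    (hδ.eventually (gt_mem_nhds (half_pos hε)))).exists
  filter_upwards [h K] with x hx
  rw [Real.dist_eq] at hbK ⊢
  calc |a x - L| ≤ |a x - b K| + |b K - L| := abs_sub_le _ _ _
    _ < ε := by linarith

section Sieve

variable (q : ℕ → ℕ)

def sifted (K x : ℕ) : Finset ℕ := {N ∈ Ioc 0 x | ∀ m < K, ¬ q m ∣ N}

open Classical in
noncomputable def siftedAll (x : ℕ) : Finset ℕ := {N ∈ Ioc 0 x | ∀ m, ¬ q m ∣ N}

variable {q}

theorem card_filter_dvd_sifted {K : ℕ} (hq : ∀ m < K, Nat.Coprime (q m) (q K)) (x : ℕ) :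
    #{N ∈ sifted q K x | q K ∣ N} = #(sifted q K (x / q K)) := by
  rcases (q K).eq_zero_or_pos with h0 | hpos
  · simp +contextual [sifted, h0, Nat.pos_iff_ne_zero]
  have : {N ∈ sifted q K x | q K ∣ N} =
      (sifted q K (x / q K)).map ⟨(q K * ·), mul_right_injective₀ hpos.ne'⟩ := by
    ext N
    simp only [sifted, mem_filter, Finset.mem_map, mem_Ioc, Function.Embedding.coeFn_mk]
    constructor
    · rintro ⟨⟨⟨hN0, hNx⟩, hN⟩, M, rfl⟩
      have hMx : M ≤ x / q K := (Nat.le_div_iff_mul_le hpos).2 (by linarith)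
      exact ⟨M, ⟨⟨Nat.pos_of_mul_pos_left hN0, hMx⟩,
        fun m hm hdvd => hN m hm (hdvd.mul_left _)⟩, rfl⟩
    · rintro ⟨M, ⟨⟨hM0, hMx⟩, hM⟩, rfl⟩
      have hNx : q K * M ≤ x := mul_comm M (q K) ▸ (Nat.le_div_iff_mul_le hpos).1 hMx
      exact ⟨⟨⟨Nat.mul_pos hpos hM0, hNx⟩,
        fun m hm hdvd => hM m hm ((hq m hm).dvd_of_dvd_mul_left hdvd)⟩, dvd_mul_right _ _⟩
  rw [this, card_map]

theorem card_sifted_succ {K : ℕ} (hq : ∀ m < K, Nat.Coprime (q m) (q K)) (x : ℕ) :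
    #(sifted q (K + 1) x) + #(sifted q K (x / q K)) = #(sifted q K x) := by
  have : sifted q (K + 1) x = {N ∈ sifted q K x | ¬ q K ∣ N} := by
    ext N
    simp only [sifted, mem_filter, Nat.forall_lt_succ_right, and_assoc]
  rw [this, ← card_filter_dvd_sifted hq, add_comm, card_filter_add_card_filter_not]

theorem abs_card_sifted_sub_le (hq : Pairwise (Nat.Coprime on q)) (K x : ℕ) :
    |(#(sifted q K x) : ℝ) - x * ∏ m ∈ range K, (1 - (q m : ℝ)⁻¹)| ≤ 2 ^ K - 1 := by
  induction K generalizing x with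
  | zero => simp [sifted]
  | succ K ih =>
    set P := ∏ m ∈ range K, (1 - (q m : ℝ)⁻¹)
    set y := x / q K
    have hP : 0 ≤ P ∧ P ≤ 1 :=
      ⟨prod_nonneg fun m _ => sub_nonneg.2 (Nat.cast_inv_le_one _),
        prod_le_one (fun m _ => sub_nonneg.2 (Nat.cast_inv_le_one _)) fun m _ => by simp⟩
    have hy : (y : ℝ) ≤ x / q K ∧ (x / q K : ℝ) ≤ y + 1 := by
      rw [show y = ⌊(x / q K : ℝ)⌋₊ from (Nat.floor_div_eq_div _ _).symm]
      exact ⟨Nat.floor_le (by positivity), (Nat.lt_floor_add_one _).le⟩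
    have hrec : (#(sifted q (K + 1) x) : ℝ) = #(sifted q K x) - #(sifted q K y) := by
      refine eq_sub_of_add_eq ?_
      exact_mod_cast card_sifted_succ (fun m hm => hq hm.ne) x
    have key : (#(sifted q (K + 1) x) : ℝ) - x * ∏ m ∈ range (K + 1), (1 - (q m : ℝ)⁻¹)
        = (#(sifted q K x) - x * P) - (#(sifted q K y) - y * P) + P * (x / q K - y) := by
      rw [hrec, prod_range_succ]
      ring
    have hPd : 0 ≤ P * (x / q K - y) ∧ P * (x / q K - y) ≤ 1 :=
      ⟨mul_nonneg hP.1 (by linarith), by nlinarith⟩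
    have h1 := abs_le.1 (ih x)
    have h2 := abs_le.1 (ih y)
    rw [key, abs_le, pow_succ]
    constructor <;> linarith

theorem siftedAll_subset_sifted (K x : ℕ) : siftedAll q x ⊆ sifted q K x := by
  intro N
  simp only [siftedAll, sifted, mem_filter]
  exact fun ⟨hN, h⟩ => ⟨hN, fun m _ => h m⟩

theorem card_sifted_le (hs : Summable fun m => (q m : ℝ)⁻¹) (K x : ℕ) :
    (#(sifted q K x) : ℝ) ≤ #(siftedAll q x) + x * ∑' j, (q (j + K) : ℝ)⁻¹ := by
  have hs' : Summable fun j => (q (j + K) : ℝ)⁻¹ := (summable_nat_add_iff K).2 hs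
  -- `T` contains every `j` for which `q (j + K)` divides some `N ∈ (0, x]`
  obtain hT := Filter.eventually_cofinite.1 <| hs'.tendsto_cofinite_zero.eventually <|
    ge_mem_nhds (by positivity : (0 : ℝ) < ((x : ℝ) + 1)⁻¹)
  set T := hT.toFinset
  have hsub : sifted q K x ⊆
      siftedAll q x ∪ T.biUnion fun j => {N ∈ Ioc 0 x | q (j + K) ∣ N} := by
    intro N hN
    simp only [sifted, mem_filter, mem_Ioc] at hN
    by_cases hA : ∀ m, ¬ q m ∣ N
    · exact mem_union_left _ (by simpa [siftedAll] using ⟨hN.1, hA⟩)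
    obtain ⟨m, hm⟩ := not_forall_not.1 hA
    obtain ⟨j, rfl⟩ : ∃ j, m = j + K :=
      ⟨m - K, by have := not_lt.1 fun h => hN.2 m h hm; omega⟩
    have hqN : 0 < q (j + K) ∧ q (j + K) ≤ N :=
      ⟨Nat.pos_of_dvd_of_pos hm hN.1.1, Nat.le_of_dvd hN.1.1 hm⟩
    refine mem_union_right _ (mem_biUnion.2 ⟨j, ?_, by simpa using ⟨hN.1, hm⟩⟩)
    simp only [T, Set.Finite.mem_toFinset, Set.mem_ofPred_eq, not_le]
    exact inv_strictAnti₀ (by exact_mod_cast hqN.1 : (0 : ℝ) < q (j + K))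
      (by exact_mod_cast (by omega : q (j + K) < x + 1))
  have hcard : #(sifted q K x) ≤ #(siftedAll q x) + ∑ j ∈ T, x / q (j + K) := by
    refine (card_le_card hsub).trans ((card_union_le _ _).trans (Nat.add_le_add_left ?_ _))
    refine card_biUnion_le.trans (le_of_eq (sum_congr rfl fun j _ => ?_))
    exact Nat.Ioc_filter_dvd_card_eq_div _ _
  calc (#(sifted q K x) : ℝ)
        ≤ #(siftedAll q x) + ∑ j ∈ T, ((x / q (j + K) : ℕ) : ℝ) := by exact_mod_cast hcard
    _ ≤ #(siftedAll q x) + x * ∑ j ∈ T, (q (j + K) : ℝ)⁻¹ := by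
        rw [mul_sum]
        gcongr with j
        exact Nat.cast_div_le.trans_eq (div_eq_mul_inv _ _)
    _ ≤ #(siftedAll q x) + x * ∑' j, (q (j + K) : ℝ)⁻¹ := by
        gcongr
        exact hs'.sum_le_tsum _ fun j _ => by positivity

theorem abs_card_siftedAll_div_sub_le (hq : Pairwise (Nat.Coprime on q))
    (hs : Summable fun m => (q m : ℝ)⁻¹) (K : ℕ) {x : ℕ} (hx : 0 < x) :
    |(#(siftedAll q x) : ℝ) / x - ∏ m ∈ range K, (1 - (q m : ℝ)⁻¹)| ≤
      2 ^ K / x + ∑' j, (q (j + K) : ℝ)⁻¹ := by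
  set P := ∏ m ∈ range K, (1 - (q m : ℝ)⁻¹)
  set tail := ∑' j, (q (j + K) : ℝ)⁻¹
  have hx' : (0 : ℝ) < x := by exact_mod_cast hx
  have hsub : (#(siftedAll q x) : ℝ) ≤ #(sifted q K x) := by
    exact_mod_cast card_le_card (siftedAll_subset_sifted K x)
  have htail : 0 ≤ x * tail := mul_nonneg hx'.le (tsum_nonneg fun j => by positivity)
  have hC := abs_le.1 (abs_card_sifted_sub_le hq K x)
  have hA : |(#(siftedAll q x) : ℝ) - x * P| ≤ 2 ^ K + x * tail := by
    have hle := card_sifted_le hs K x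
    exact abs_le.2 ⟨by linarith, by linarith⟩
  calc |(#(siftedAll q x) : ℝ) / x - P| = |(#(siftedAll q x) : ℝ) - x * P| / x := by
        rw [div_sub' hx'.ne', abs_div, abs_of_pos hx']
    _ ≤ (2 ^ K + x * tail) / x := by gcongr
    _ = 2 ^ K / x + tail := by field_simp

theorem hasDensity_forall_not_dvd (hq : Pairwise (Nat.Coprime on q))
    (hs : Summable fun m => (q m : ℝ)⁻¹) :
    HasDensity {N | 0 < N ∧ ∀ m, ¬ q m ∣ N} (∏' m, (1 - (q m : ℝ)⁻¹)) := by
  have hncard (x : ℕ) :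
      {N | N ∈ {N | 0 < N ∧ ∀ m, ¬ q m ∣ N} ∧ N ≤ x}.ncard = #(siftedAll q x) := by
    rw [← Set.ncard_coe_finset]
    congr 1
    ext N
    simp only [siftedAll, Set.mem_ofPred_eq, mem_coe, mem_filter, mem_Ioc]
    exact and_right_comm
  unfold HasDensity
  simp only [hncard]
  refine Tendsto.of_forall_eventually_abs_sub_le
    (b := fun K => ∏ m ∈ range K, (1 - (q m : ℝ)⁻¹))
    (δ := fun K => ∑' j, (q (j + K) : ℝ)⁻¹ + 1 / (K + 1)) ?_ ?_ fun K => ?_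
  · simp_rw [sub_eq_add_neg]
    exact (Real.multipliable_one_add_of_summable hs.neg).tendsto_prod_tprod_nat
  · simpa using (tendsto_sum_nat_add fun j => (q j : ℝ)⁻¹).add
      tendsto_one_div_add_atTop_nhds_zero_nat
  · have hsmall := (tendsto_const_div_atTop_nhds_zero_nat (2 ^ K : ℝ)).eventually
      (ge_mem_nhds (Nat.one_div_pos_of_nat (n := K)))
    filter_upwards [eventually_gt_atTop 0, hsmall] with x hx hxK
    exact (abs_card_siftedAll_div_sub_le hq hs K hx).trans (by rw [add_comm]; gcongr)

theorem tprod_one_sub_inv_pos (hq : ∀ m, 1 < q m) (hs : Summable fun m => (q m : ℝ)⁻¹) :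
    0 < ∏' m, (1 - (q m : ℝ)⁻¹) := by
  simp_rw [sub_eq_add_neg]
  rw [← Real.rexp_tsum_eq_tprod _ (Real.summable_log_one_add_of_summable hs.neg)]
  · exact Real.exp_pos _
  · intro m
    have : (q m : ℝ)⁻¹ < 1 := inv_lt_one_of_one_lt₀ (by exact_mod_cast hq m)
    linarith

end Sieve

theorem Nat.Prime.not_pow_succ_dvd_iff {p k n : ℕ} (hp : p.Prime) (hn : n ≠ 0) :
    ¬ p ^ (k + 1) ∣ n ↔ (p ∣ n → n.factorization p ≤ k) := by
  rw [hp.pow_dvd_iff_le_factorization hn, not_le, Nat.lt_succ_iff]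
  refine ⟨fun h _ => h, fun h => ?_⟩
  by_cases hpn : p ∣ n
  · exact h hpn
  · simp [Nat.factorization_eq_zero_of_not_dvd hpn]

theorem nthPrime_prime (n : ℕ) : (nthPrime n).Prime := Nat.prime_nth_prime _

theorem pairwise_coprime_nthPrime_pow :
    Pairwise (Nat.Coprime on fun m => nthPrime (m + 1) ^ (m + 2)) := fun _ _ hij =>
  Nat.Coprime.pow _ _ <| (Nat.coprime_primes (nthPrime_prime _) (nthPrime_prime _)).2 <|
    (Nat.nth_injective Nat.infinite_setOfPred_prime).ne hij

theorem summable_inv_nthPrime_pow :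
    Summable fun m => ((nthPrime (m + 1) ^ (m + 2) : ℕ) : ℝ)⁻¹ := by
  refine summable_geometric_two.of_nonneg_of_le (fun m => by positivity) fun m => ?_
  rw [one_div_pow, one_div]
  have h2 : 2 ^ m ≤ nthPrime (m + 1) ^ (m + 2) :=
    (Nat.pow_le_pow_right two_pos (by omega)).trans
      (Nat.pow_le_pow_left (nthPrime_prime _).two_le _)
  exact inv_anti₀ (by positivity) (by exact_mod_cast h2)

theorem setOf_factorization_nthPrime_le_eq :
    {N : ℕ | 0 < N ∧ ∀ n : ℕ, 1 ≤ n → nthPrime n ∣ N →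
        N.factorization (nthPrime n) ≤ n} =
      {N | 0 < N ∧ ∀ m, ¬ nthPrime (m + 1) ^ (m + 2) ∣ N} := by
  ext N
  refine and_congr_right fun hN => ⟨fun h m => ?_, fun h n hn => ?_⟩
  · exact ((nthPrime_prime _).not_pow_succ_dvd_iff hN.ne').2 (h (m + 1) (by omega))
  · obtain ⟨m, rfl⟩ := Nat.exists_eq_add_of_le' hn
    exact ((nthPrime_prime _).not_pow_succ_dvd_iff hN.ne').1 (h m)

theorem stmt_17 :
    HasDensity
      {N : ℕ | 0 < N ∧ ∀ n : ℕ, 1 ≤ n → nthPrime n ∣ N →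
        N.factorization (nthPrime n) ≤ n}
      (∏' n : ℕ, (1 - (nthPrime (n + 1) : ℝ)⁻¹ ^ (n + 2))) ∧
    0 < ∏' n : ℕ, (1 - (nthPrime (n + 1) : ℝ)⁻¹ ^ (n + 2)) := by
  have hprod : ∏' n : ℕ, (1 - (nthPrime (n + 1) : ℝ)⁻¹ ^ (n + 2)) =
      ∏' m, (1 - ((nthPrime (m + 1) ^ (m + 2) : ℕ) : ℝ)⁻¹) := by
    simp [inv_pow]
  rw [setOf_factorization_nthPrime_le_eq, hprod]
  exact ⟨hasDensity_forall_not_dvd pairwise_coprime_nthPrime_pow summable_inv_nthPrime_pow,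
    tprod_one_sub_inv_pos (fun m => Nat.one_lt_pow (by omega) (nthPrime_prime _).one_lt)
      summable_inv_nthPrime_pow⟩
end

section
/- If S is a set of positive integers with 1 ∈ S and 2 ∈ S, then the density of exponentially S-numbers is at least ∏_p (1 − 1/p³); if instead 1 ∈ S and 2 ∉ S, the density is at most ∏_p (1 − (p−1)/p³). Consequently, no density value of an exponentially S-number set (over S containing 1) lies in the open interval (∏_p (1 − (p−1)/p³), ∏_p (1 − 1/p³)). -/
/-!
If `{1, 2} ⊆ S`, every cube-free integer is an exponentially `S`-number; if `2 ∉ S`, no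
exponentially `S`-number is divisible by exactly `p²` for a prime `p`. Imposed only at the primes
of a finite set `F`, either condition defines a set that is periodic modulo `∏_{p ∈ F} p³`, whose
density is the product of the local densities `1 - 1/p³`, resp. `1 - (p - 1)/p³`, by the Chinese
remainder theorem. Comparing densities and letting `F` grow gives both bounds; for the lower one,
the integers divisible by `q³` for some prime `q ∉ F` have counting function at most
`N ∑_{q ∉ F} q⁻³ + 1`, and this tail sum tends to `0`.
-/

open Finset Filter Topology Function

lemma Function.Periodic.of_dvd {α : Type*} {f : ℕ → α} {a b : ℕ} (hf : Periodic f a)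
    (hab : a ∣ b) : Periodic f b := by
  obtain ⟨k, rfl⟩ := hab
  simpa [mul_comm] using hf.nat_mul k

namespace Nat

section Count

variable {q : ℕ → Prop} [DecidablePred q] {m : ℕ}

lemma count_add_count_not (n : ℕ) : count q n + count (fun k => ¬ q k) n = n := by
  simp only [count_eq_card_filter_range, card_filter_add_card_filter_not, card_range]

lemma count_and_not_add_count {r : ℕ → Prop} [DecidablePred r] (hrq : ∀ k, r k → q k)
    (n : ℕ) : count (fun k => q k ∧ ¬ r k) n + count r n = count q n := by
  simp only [count_eq_card_filter_range]
  rw [← filter_filter, add_comm, ← card_filter_add_card_filter_not (s := {k ∈ range n | q k}) r,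
    filter_filter]
  congr 2
  ext k
  simp only [mem_filter, mem_range]
  have := hrq k
  tauto

lemma count_dvd_of_dvd {d : ℕ} (hdm : d ∣ m) : count (d ∣ ·) m = m / d := by
  rcases Nat.eq_zero_or_pos d with rfl | hd
  · obtain rfl := Nat.eq_zero_of_zero_dvd hdm
    simp
  simpa [Nat.modEq_zero_iff_dvd, Nat.mod_eq_zero_of_dvd hdm] using count_modEq_card (b := m) hd 0

lemma count_not_dvd_self (hm : m ≠ 0) : count (fun n => ¬ m ∣ n) m = m - 1 := by
  have := count_add_count_not (q := (m ∣ ·)) m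
  rw [count_dvd_of_dvd dvd_rfl, Nat.div_self (Nat.pos_of_ne_zero hm)] at this
  omega

lemma count_pow_two_dvd_and_not_pow_three_dvd {p : ℕ} (hp : p ≠ 0) :
    count (fun n => p ^ 2 ∣ n ∧ ¬ p ^ 3 ∣ n) (p ^ 3) = p - 1 := by
  have h23 : p ^ 2 ∣ p ^ 3 := pow_dvd_pow p (by norm_num)
  have := count_and_not_add_count (q := (p ^ 2 ∣ ·)) (r := (p ^ 3 ∣ ·)) (fun _ => h23.trans)
    (p ^ 3)
  rw [count_dvd_of_dvd h23, count_dvd_of_dvd dvd_rfl, Nat.div_self (by positivity),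
    Nat.pow_div (by norm_num) (Nat.pos_of_ne_zero hp), pow_one] at this
  omega

lemma count_mul (hq : Periodic q m) (k : ℕ) : count q (m * k) = k * count q m := by
  induction k with
  | zero => simp
  | succ k ih =>
    have hshift : ∀ j, q (m * k + j) = q j := fun j => by
      rw [add_comm]
      exact hq.of_dvd (dvd_mul_right m k) j
    rw [mul_add_one, count_add, ih]
    simp only [hshift]
    ring

lemma count_mul_add (hq : Periodic q m) (k r : ℕ) :
    count q (m * k + r) = k * count q m + count q r := by
  have hshift : ∀ j, q (m * k + j) = q j := fun j => by
    rw [add_comm]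
    exact hq.of_dvd (dvd_mul_right m k) j
  rw [count_add, count_mul hq]
  simp only [hshift]

lemma abs_count_sub_le (hm : 0 < m) (hq : Periodic q m) (n : ℕ) :
    |(count q n : ℝ) - count q m / m * n| ≤ count q m := by
  have hcount := count_mul_add hq (n / m) (n % m)
  rw [Nat.div_add_mod] at hcount
  have hmR : (0 : ℝ) < m := by exact_mod_cast hm
  have hnR : (n : ℝ) = m * (n / m : ℕ) + (n % m : ℕ) := by
    exact_mod_cast (Nat.div_add_mod n m).symm
  have hrR : ((n % m : ℕ) : ℝ) < m := by exact_mod_cast Nat.mod_lt n hm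
  have hcR : (count q n : ℝ) = (n / m : ℕ) * count q m + count q (n % m) := by
    exact_mod_cast hcount
  have hremR : (count q (n % m) : ℝ) ≤ count q m := by
    exact_mod_cast count_monotone q (Nat.mod_lt n hm).le
  rw [abs_le, hcR, hnR]
  field_simp
  constructor <;> nlinarith [(count q (n % m)).cast_nonneg (α := ℝ)]

lemma count_eq_card_zmod [NeZero m] : count q m = Fintype.card {x : ZMod m // q x.val} := by
  rw [count_eq_card_filter_range, Fintype.card_subtype]
  refine card_nbij' (fun k => (k : ZMod m)) ZMod.val ?_ ?_ ?_ ?_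
  · intro k hk
    simp only [coe_filter, mem_range, Set.mem_ofPred_eq] at hk
    simp [ZMod.val_cast_of_lt hk.1, hk.2]
  · intro x hx
    simp_all [ZMod.val_lt]
  · intro k hk
    simp only [coe_filter, mem_range, Set.mem_ofPred_eq] at hk
    simp [ZMod.val_cast_of_lt hk.1]
  · intro x _
    simp

end Count

lemma count_and_of_coprime {a b : ℕ} [NeZero a] [NeZero b] (hab : a.Coprime b)
    {q₁ q₂ : ℕ → Prop} [DecidablePred q₁] [DecidablePred q₂]
    (h₁ : Periodic q₁ a) (h₂ : Periodic q₂ b) :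
    count (fun n => q₁ n ∧ q₂ n) (a * b) = count q₁ a * count q₂ b := by
  rw [count_eq_card_zmod, count_eq_card_zmod, count_eq_card_zmod, ← Fintype.card_prod]
  refine Fintype.card_congr (((ZMod.chineseRemainder hab).toEquiv.subtypeEquiv ?_).trans
    Equiv.subtypeProdEquivProd)
  intro x
  obtain ⟨n, rfl⟩ : ∃ n : ℕ, (n : ZMod (a * b)) = x := ⟨x.val, ZMod.natCast_zmod_val x⟩
  simp only [RingEquiv.toEquiv_eq_coe, EquivLike.coe_coe, map_natCast, Prod.fst_natCast,
    Prod.snd_natCast, ZMod.val_natCast]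
  rw [(h₁.of_dvd (dvd_mul_right a b)).map_mod_nat, (h₂.of_dvd (dvd_mul_left b a)).map_mod_nat,
    h₁.map_mod_nat, h₂.map_mod_nat]

lemma periodic_forall_mem {ι : Type*} (s : Finset ι) {m : ι → ℕ} {q : ι → ℕ → Prop}
    (hq : ∀ i ∈ s, Periodic (q i) (m i)) :
    Periodic (fun n => ∀ i ∈ s, q i n) (∏ i ∈ s, m i) := fun n =>
  propext <| forall₂_congr fun i hi => ((hq i hi).of_dvd (dvd_prod_of_mem m hi) n).to_iff

lemma count_forall_mem_of_coprime {ι : Type*} [DecidableEq ι] (s : Finset ι) {m : ι → ℕ}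
    (hm₀ : ∀ i ∈ s, m i ≠ 0) (hm : (s : Set ι).Pairwise (Coprime on m))
    {q : ι → ℕ → Prop} [∀ i, DecidablePred (q i)] (hq : ∀ i ∈ s, Periodic (q i) (m i)) :
    count (fun n => ∀ i ∈ s, q i n) (∏ i ∈ s, m i) = ∏ i ∈ s, count (q i) (m i) := by
  induction s using Finset.induction_on with
  | empty => simp
  | @insert a s ha ih =>
    have : NeZero (m a) := ⟨hm₀ a (mem_insert_self a s)⟩
    have : NeZero (∏ i ∈ s, m i) :=
      ⟨prod_ne_zero_iff.mpr fun i hi => hm₀ i (mem_insert_of_mem hi)⟩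
    have hcop : (m a).Coprime (∏ i ∈ s, m i) := Coprime.prod_right fun i hi =>
      hm (mem_insert_self a s) (mem_insert_of_mem hi) (ne_of_mem_of_not_mem hi ha).symm
    rw [prod_insert ha, prod_insert ha, ← ih (fun i hi => hm₀ i (mem_insert_of_mem hi))
      (hm.mono (coe_subset.mpr (subset_insert a s))) (fun i hi => hq i (mem_insert_of_mem hi)),
      ← count_and_of_coprime hcop (hq a (mem_insert_self a s))
        (periodic_forall_mem s fun i hi => hq i (mem_insert_of_mem hi))]
    simp only [forall_mem_insert]

end Nat

lemma ncard_mem_and_le_eq_count (A : Set ℕ) [DecidablePred (· ∈ A)] (N : ℕ) :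
    {n | n ∈ A ∧ n ≤ N}.ncard = Nat.count (· ∈ A) (N + 1) := by
  rw [Nat.count_eq_card_filter_range, ← Set.ncard_coe_finset]
  congr 1
  ext n
  simp [and_comm]

lemma finite_setOf_mem_and_le (A : Set ℕ) (N : ℕ) : {n | n ∈ A ∧ n ≤ N}.Finite :=
  (Set.finite_Iic N).subset fun _ hn => hn.2

lemma tendsto_div_natCast_of_abs_sub_le {g : ℕ → ℝ} {α C : ℝ} (h : ∀ N, |g N - α * N| ≤ C) :
    Tendsto (fun N => g N / N) atTop (𝓝 α) := by
  have hC : Tendsto (fun N : ℕ => C / N) atTop (𝓝 0) :=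
    tendsto_const_nhds.div_atTop tendsto_natCast_atTop_atTop
  refine tendsto_iff_norm_sub_tendsto_zero.mpr
    (squeeze_zero' (Eventually.of_forall fun _ => norm_nonneg _) ?_ hC)
  filter_upwards [eventually_gt_atTop 0] with N hN
  have hNR : (0 : ℝ) < N := by exact_mod_cast hN
  rw [Real.norm_eq_abs, le_div_iff₀ hNR, ← abs_of_pos hNR, ← abs_mul, abs_of_pos hNR, sub_mul,
    div_mul_cancel₀ _ hNR.ne']
  exact h N

lemma hasDensity_of_periodic {q : ℕ → Prop} [DecidablePred q] {m : ℕ} (hm : 0 < m)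
    (hq : Periodic q m) : HasDensity {n | q n} (Nat.count q m / m) := by
  unfold HasDensity
  simp_rw [ncard_mem_and_le_eq_count]
  refine tendsto_div_natCast_of_abs_sub_le (C := Nat.count q m + Nat.count q m / m) fun N => ?_
  have h := Nat.abs_count_sub_le hm hq (N + 1)
  push_cast at h
  calc |(Nat.count q (N + 1) : ℝ) - Nat.count q m / m * N|
      = |((Nat.count q (N + 1) : ℝ) - Nat.count q m / m * (N + 1)) + Nat.count q m / m| := by
        ring_nf
    _ ≤ _ := (abs_add_le _ _).trans (add_le_add h (abs_of_nonneg (by positivity)).le)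

lemma hasDensity_forall_mem_of_coprime {ι : Type*} [DecidableEq ι] (s : Finset ι) {m : ι → ℕ}
    (hm₀ : ∀ i ∈ s, m i ≠ 0) (hm : (s : Set ι).Pairwise (Nat.Coprime on m))
    {q : ι → ℕ → Prop} [∀ i, DecidablePred (q i)] (hq : ∀ i ∈ s, Periodic (q i) (m i)) :
    HasDensity {n | ∀ i ∈ s, q i n} (∏ i ∈ s, (Nat.count (q i) (m i) : ℝ) / m i) := by
  have h := hasDensity_of_periodic (Nat.pos_of_ne_zero (prod_ne_zero_iff.mpr hm₀))
    (Nat.periodic_forall_mem s hq)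
  rwa [Nat.count_forall_mem_of_coprime s hm₀ hm hq, Nat.cast_prod, Nat.cast_prod,
    ← prod_div_distrib] at h

lemma hasDensity_forall_mem_primes_of_periodic (F : Finset Nat.Primes) {q : Nat.Primes → ℕ → Prop}
    [∀ p, DecidablePred (q p)] (hq : ∀ p, Periodic (q p) (p ^ 3)) :
    HasDensity {n | ∀ p ∈ F, q p n} (∏ p ∈ F, (Nat.count (q p) (p ^ 3) : ℝ) / (p : ℝ) ^ 3) := by
  simpa using hasDensity_forall_mem_of_coprime F (m := fun p : Nat.Primes => (p : ℕ) ^ 3)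
    (fun p _ => pow_ne_zero 3 p.2.ne_zero)
    (fun p _ r _ hpr => Nat.coprime_pow_primes 3 3 p.2 r.2 (Subtype.coe_injective.ne hpr))
    (fun p _ => hq p)

lemma HasDensity.le_add_of_subset_union {A B E : Set ℕ} {a b ε C : ℝ} (hA : HasDensity A a)
    (hB : HasDensity B b) (hBAE : B ⊆ A ∪ E)
    (hE : ∀ N, ({n | n ∈ E ∧ n ≤ N}.ncard : ℝ) ≤ ε * N + C) : b ≤ a + ε := by
  have hcount : ∀ N, ({n | n ∈ B ∧ n ≤ N}.ncard : ℝ) ≤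
      {n | n ∈ A ∧ n ≤ N}.ncard + (ε * N + C) := by
    intro N
    have hsub : {n | n ∈ B ∧ n ≤ N} ⊆ {n | n ∈ A ∧ n ≤ N} ∪ {n | n ∈ E ∧ n ≤ N} :=
      fun n ⟨hnB, hnN⟩ => (hBAE hnB).imp (⟨·, hnN⟩) (⟨·, hnN⟩)
    have := (Set.ncard_le_ncard hsub ((finite_setOf_mem_and_le A N).union
      (finite_setOf_mem_and_le E N))).trans (Set.ncard_union_le _ _)
    exact (Nat.cast_le.mpr this).trans (by push_cast; linarith [hE N])
  have hupper : Tendsto (fun N : ℕ => ({n | n ∈ A ∧ n ≤ N}.ncard : ℝ) / N + ε + C / N) atTop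
      (𝓝 (a + ε + 0)) :=
    (hA.add_const ε).add (tendsto_const_nhds.div_atTop tendsto_natCast_atTop_atTop)
  rw [← add_zero (a + ε)]
  refine le_of_tendsto_of_tendsto hB hupper ?_
  filter_upwards [eventually_gt_atTop 0] with N hN
  have hNR : (0 : ℝ) < N := by exact_mod_cast hN
  rw [div_add' _ _ _ hNR.ne', ← add_div, div_le_div_iff_of_pos_right hNR]
  linarith [hcount N]

lemma HasDensity.mono {A B : Set ℕ} {a b : ℝ} (hA : HasDensity A a) (hB : HasDensity B b)
    (hBA : B ⊆ A) : b ≤ a := by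
  simpa using hA.le_add_of_subset_union hB (E := ∅) (ε := 0) (C := 0) (by simpa using hBA)
    (fun N => by simp)

lemma ncard_exists_dvd_le {ι : Type*} {m : ι → ℕ} (hm : Injective m)
    (hsum : Summable fun i => 1 / (m i : ℝ)) (N : ℕ) :
    ({n | (∃ i, m i ∣ n) ∧ n ≤ N}.ncard : ℝ) ≤ (∑' i, 1 / (m i : ℝ)) * N + 1 := by
  classical
  set I : Finset ι := (range (N + 1)).preimage m hm.injOn
  have hsub : {n | (∃ i, m i ∣ n) ∧ n ≤ N} ⊆
      ↑(insert 0 (I.biUnion fun i => {n ∈ Ioc 0 N | m i ∣ n})) := by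
    rintro n ⟨⟨i, hi⟩, hnN⟩
    rcases Nat.eq_zero_or_pos n with rfl | hn
    · simp
    have hiN : m i < N + 1 := Nat.lt_succ_of_le ((Nat.le_of_dvd hn hi).trans hnN)
    simp only [coe_insert, coe_biUnion, Set.mem_insert_iff, Set.mem_iUnion, coe_filter]
    exact Or.inr ⟨i, by simpa [I] using hiN, by simp [hn, hnN, hi]⟩
  have hcard : {n | (∃ i, m i ∣ n) ∧ n ≤ N}.ncard ≤ ∑ i ∈ I, N / m i + 1 := by
    refine (Set.ncard_le_ncard hsub (Finset.finite_toSet _)).trans ?_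
    rw [Set.ncard_coe_finset]
    refine (card_insert_le _ _).trans (Nat.add_le_add_right (card_biUnion_le.trans ?_) 1)
    simp only [Nat.Ioc_filter_dvd_card_eq_div, le_refl]
  calc ({n | (∃ i, m i ∣ n) ∧ n ≤ N}.ncard : ℝ)
      ≤ ∑ i ∈ I, ((N / m i : ℕ) : ℝ) + 1 := by exact_mod_cast hcard
    _ ≤ ∑ i ∈ I, 1 / (m i : ℝ) * N + 1 := by
      gcongr with i
      rw [one_div_mul_eq_div]
      exact Nat.cast_div_le
    _ ≤ (∑' i, 1 / (m i : ℝ)) * N + 1 := by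
      rw [← sum_mul]
      gcongr
      exact hsum.sum_le_tsum I fun i _ => by positivity

lemma hasDensity_forall_mem_not_pow_three_dvd (F : Finset Nat.Primes) :
    HasDensity {n | ∀ p ∈ F, ¬ (p : ℕ) ^ 3 ∣ n} (∏ p ∈ F, (1 - 1 / (p : ℝ) ^ 3)) := by
  have h := hasDensity_forall_mem_primes_of_periodic F (q := fun p n => ¬ (p : ℕ) ^ 3 ∣ n)
    fun p n => by simp [Nat.dvd_add_self_right]
  have hval (p : Nat.Primes) : (Nat.count (fun n => ¬ (p : ℕ) ^ 3 ∣ n) ((p : ℕ) ^ 3) : ℝ) /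
      (p : ℝ) ^ 3 = 1 - 1 / (p : ℝ) ^ 3 := by
    have hp3 : (p : ℕ) ^ 3 ≠ 0 := pow_ne_zero 3 p.2.ne_zero
    have hp3R : (p : ℝ) ^ 3 ≠ 0 := by exact_mod_cast hp3
    rw [Nat.count_not_dvd_self hp3, Nat.cast_sub (Nat.one_le_iff_ne_zero.mpr hp3)]
    push_cast
    rw [sub_div, div_self hp3R]
  rwa [prod_congr rfl fun p _ => hval p] at h

lemma hasDensity_forall_mem_pow_two_dvd_imp_pow_three_dvd (F : Finset Nat.Primes) :
    HasDensity {n | ∀ p ∈ F, (p : ℕ) ^ 2 ∣ n → (p : ℕ) ^ 3 ∣ n}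
      (∏ p ∈ F, (1 - ((p : ℝ) - 1) / (p : ℝ) ^ 3)) := by
  have h := hasDensity_forall_mem_primes_of_periodic F
    (q := fun p n => (p : ℕ) ^ 2 ∣ n → (p : ℕ) ^ 3 ∣ n)
    fun p n => by
      simp [Nat.dvd_add_self_right, Nat.dvd_add_left (pow_dvd_pow (p : ℕ) (by norm_num : 2 ≤ 3))]
  have hval (p : Nat.Primes) :
      (Nat.count (fun n => (p : ℕ) ^ 2 ∣ n → (p : ℕ) ^ 3 ∣ n) ((p : ℕ) ^ 3) : ℝ) /
        (p : ℝ) ^ 3 = 1 - ((p : ℝ) - 1) / (p : ℝ) ^ 3 := by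
    have hcount := Nat.count_add_count_not
      (q := fun n => (p : ℕ) ^ 2 ∣ n ∧ ¬ (p : ℕ) ^ 3 ∣ n) ((p : ℕ) ^ 3)
    simp only [not_and, not_not] at hcount
    rw [Nat.count_pow_two_dvd_and_not_pow_three_dvd p.2.ne_zero] at hcount
    have hcountR := congrArg (Nat.cast (R := ℝ)) hcount
    push_cast [Nat.cast_sub p.2.one_le] at hcountR
    have hp3R : (p : ℝ) ^ 3 ≠ 0 := pow_ne_zero 3 (by exact_mod_cast p.2.ne_zero)
    rw [show (Nat.count (fun n => (p : ℕ) ^ 2 ∣ n → (p : ℕ) ^ 3 ∣ n) ((p : ℕ) ^ 3) : ℝ) =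
      (p : ℝ) ^ 3 - ((p : ℝ) - 1) by linarith, sub_div, div_self hp3R]
  rwa [prod_congr rfl fun p _ => hval p] at h

lemma isExpSNumber_of_forall_not_pow_three_dvd {S : Set ℕ} (h1 : 1 ∈ S) (h2 : 2 ∈ S) {n : ℕ}
    (hn : n ≠ 0) (h : ∀ p, p.Prime → ¬ p ^ 3 ∣ n) : IsExpSNumber S n := by
  refine ⟨Nat.pos_of_ne_zero hn, fun p hp hpn => ?_⟩
  have hpos : 0 < n.factorization p := hp.factorization_pos_of_dvd hn hpn
  have hlt : n.factorization p < 3 :=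
    lt_of_not_ge fun h3 => h p hp ((hp.pow_dvd_iff_le_factorization hn).mpr h3)
  interval_cases n.factorization p <;> assumption

lemma IsExpSNumber.pow_three_dvd_of_pow_two_dvd {S : Set ℕ} (h2 : 2 ∉ S) {n p : ℕ}
    (hn : IsExpSNumber S n) (hp : p.Prime) (hpn : p ^ 2 ∣ n) : p ^ 3 ∣ n := by
  have hn0 := hn.1.ne'
  have h2le : 2 ≤ n.factorization p := (hp.pow_dvd_iff_le_factorization hn0).mp hpn
  have hne : n.factorization p ≠ 2 := fun heq =>
    h2 (heq ▸ hn.2 p hp ((dvd_pow_self p two_ne_zero).trans hpn))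
  exact (hp.pow_dvd_iff_le_factorization hn0).mpr (by omega)

lemma setOf_forall_mem_not_pow_three_dvd_subset {S : Set ℕ} (h1 : 1 ∈ S) (h2 : 2 ∈ S)
    (F : Finset Nat.Primes) :
    {n | ∀ p ∈ F, ¬ (p : ℕ) ^ 3 ∣ n} ⊆
      {n | IsExpSNumber S n} ∪
        {n | ∃ q : {p : Nat.Primes // p ∉ F}, ((q : Nat.Primes) : ℕ) ^ 3 ∣ n} := by
  intro n hn
  by_cases hE : ∃ q : {p : Nat.Primes // p ∉ F}, ((q : Nat.Primes) : ℕ) ^ 3 ∣ n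
  · exact Or.inr hE
  refine Or.inl (isExpSNumber_of_forall_not_pow_three_dvd h1 h2 ?_ fun p hp hpn => ?_)
  · rintro rfl
    obtain ⟨q, hq⟩ := Infinite.exists_notMem_finset F
    exact hE ⟨⟨q, hq⟩, dvd_zero _⟩
  · by_cases hpF : (⟨p, hp⟩ : Nat.Primes) ∈ F
    · exact hn _ hpF hpn
    · exact hE ⟨⟨⟨p, hp⟩, hpF⟩, hpn⟩

theorem le_hasDensity_of_one_mem_of_two_mem {S : Set ℕ} (h1 : 1 ∈ S) (h2 : 2 ∈ S) {d : ℝ}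
    (hd : HasDensity {N | IsExpSNumber S N} d) :
    ∏' p : Nat.Primes, (1 - 1 / (p : ℝ) ^ 3) ≤ d := by
  have hsum : Summable fun p : Nat.Primes => 1 / (p : ℝ) ^ 3 :=
    (Real.summable_one_div_nat_pow.mpr (by norm_num)).comp_injective Subtype.val_injective
  have hmul : Multipliable fun p : Nat.Primes => 1 - 1 / (p : ℝ) ^ 3 := by
    simpa [sub_eq_add_neg] using Real.multipliable_one_add_of_summable hsum.neg
  have hF (F : Finset Nat.Primes) :
      ∏ p ∈ F, (1 - 1 / (p : ℝ) ^ 3) ≤ d + ∑' q : {p // p ∉ F}, 1 / (q : ℝ) ^ 3 := by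
    have hinj : Injective fun q : {p : Nat.Primes // p ∉ F} => ((q : Nat.Primes) : ℕ) ^ 3 :=
      (Nat.pow_left_injective (by norm_num)).comp
        (Subtype.val_injective.comp Subtype.val_injective)
    have hE := ncard_exists_dvd_le hinj
      (by push_cast; exact hsum.comp_injective Subtype.val_injective)
    push_cast at hE
    exact hd.le_add_of_subset_union (hasDensity_forall_mem_not_pow_three_dvd F)
      (setOf_forall_mem_not_pow_three_dvd_subset h1 h2 F) hE
  simpa using le_of_tendsto_of_tendsto' hmul.hasProd (tendsto_const_nhds.add
    (tendsto_tsum_compl_atTop_zero fun p : Nat.Primes => 1 / (p : ℝ) ^ 3)) hF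

theorem hasDensity_le_of_two_notMem {S : Set ℕ} (h2 : 2 ∉ S) {d : ℝ}
    (hd : HasDensity {N | IsExpSNumber S N} d) :
    d ≤ ∏' p : Nat.Primes, (1 - ((p : ℝ) - 1) / (p : ℝ) ^ 3) := by
  have hsum : Summable fun p : Nat.Primes => ((p : ℝ) - 1) / (p : ℝ) ^ 3 := by
    refine ((Real.summable_one_div_nat_pow.mpr one_lt_two).comp_injective
      Subtype.val_injective).of_nonneg_of_le (fun p => ?_) (fun p => ?_)
    · have : (1 : ℝ) ≤ p := by exact_mod_cast p.2.one_le
      positivity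
    · have hp : (0 : ℝ) < p := by exact_mod_cast p.2.pos
      change ((p : ℝ) - 1) / (p : ℝ) ^ 3 ≤ 1 / (p : ℝ) ^ 2
      rw [div_le_div_iff₀ (by positivity) (by positivity)]
      nlinarith
  have hmul : Multipliable fun p : Nat.Primes => 1 - ((p : ℝ) - 1) / (p : ℝ) ^ 3 := by
    simpa [sub_eq_add_neg] using Real.multipliable_one_add_of_summable hsum.neg
  refine ge_of_tendsto' hmul.hasProd fun F => ?_
  exact (hasDensity_forall_mem_pow_two_dvd_imp_pow_three_dvd F).mono hd
    fun n hn p _ => hn.pow_three_dvd_of_pow_two_dvd h2 p.2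

theorem stmt_18 :
    (∀ S : Set ℕ, 1 ∈ S → 2 ∈ S → ∀ d : ℝ,
      HasDensity {N : ℕ | IsExpSNumber S N} d →
        (∏' p : Nat.Primes, (1 - 1 / (p : ℝ) ^ 3)) ≤ d) ∧
    (∀ S : Set ℕ, 1 ∈ S → 2 ∉ S → ∀ d : ℝ,
      HasDensity {N : ℕ | IsExpSNumber S N} d →
        d ≤ ∏' p : Nat.Primes, (1 - ((p : ℝ) - 1) / (p : ℝ) ^ 3)) ∧
    (∀ S : Set ℕ, 1 ∈ S → ∀ d : ℝ,
      HasDensity {N : ℕ | IsExpSNumber S N} d →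
        d ∉ Set.Ioo (∏' p : Nat.Primes, (1 - ((p : ℝ) - 1) / (p : ℝ) ^ 3))
                    (∏' p : Nat.Primes, (1 - 1 / (p : ℝ) ^ 3))) := by
  refine ⟨fun S h1 h2 d hd => le_hasDensity_of_one_mem_of_two_mem h1 h2 hd,
    fun S _ h2 d hd => hasDensity_le_of_two_notMem h2 hd, fun S h1 d hd ⟨hlo, hhi⟩ => ?_⟩
  by_cases h2 : 2 ∈ S
  · exact (le_hasDensity_of_one_mem_of_two_mem h1 h2 hd).not_gt hhi
  · exact (hasDensity_le_of_two_notMem h2 hd).not_gt hlo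
end

section
/- For any set S of positive integers with 1 ∈ S, the density h(E(S)) = ∏_p (1 + ∑_{i≥2} (u(i) − u(i−1))/p^i) satisfies 6/π² ≤ h(E(S)) ≤ 1. -/
open Filter Topology

-- auxiliary: the zeta-2 monoid hom
noncomputable def zeta2Hom : ℕ →*₀ ℝ where
  toFun n := 1 / (n : ℝ) ^ 2
  map_zero' := by simp
  map_one' := by simp
  map_mul' m n := by push_cast; rw [mul_pow]; rw [one_div, one_div, one_div, mul_inv]

lemma hasProd_one_sub_inv_sq :
    HasProd (fun p : Nat.Primes => 1 - 1 / (p : ℝ) ^ 2) (6 / Real.pi ^ 2) := by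
  have hsum : Summable (fun n : ℕ => ‖zeta2Hom n‖) := by
    have := hasSum_zeta_two.summable
    refine this.congr fun n => ?_
    rw [Real.norm_eq_abs, abs_of_nonneg (one_div_nonneg.mpr (by positivity))]
    rfl
  have H := EulerProduct.eulerProduct_completely_multiplicative_hasProd (f := zeta2Hom) hsum
  have ht : (∑' n, zeta2Hom n) = Real.pi ^ 2 / 6 := hasSum_zeta_two.tsum_eq
  rw [ht] at H
  have hπ : (Real.pi ^ 2 / 6 : ℝ) ≠ 0 := by positivity
  have H2 : Tendsto (fun s : Finset Nat.Primes =>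
      (∏ p ∈ s, (1 - 1 / (p : ℝ) ^ 2))⁻¹) atTop (𝓝 (Real.pi ^ 2 / 6)) := by
    refine H.congr fun s => ?_
    rw [← Finset.prod_inv_distrib]
    rfl
  have H3 := H2.inv₀ hπ
  simp only [inv_inv] at H3
  have : (Real.pi ^ 2 / 6 : ℝ)⁻¹ = 6 / Real.pi ^ 2 := by
    rw [inv_div]
  rwa [this] at H3

theorem stmt_19 (S : Set ℕ) (h1 : 1 ∈ S)
    (u : ℕ → ℝ) (hu : ∀ i, u i = Set.indicator S (fun _ => (1 : ℝ)) i) :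
    6 / Real.pi ^ 2 ≤
      (∏' p : Nat.Primes, (1 + ∑' i : ℕ, (u (i + 2) - u (i + 1)) / (p : ℝ) ^ (i + 2))) ∧
    (∏' p : Nat.Primes, (1 + ∑' i : ℕ, (u (i + 2) - u (i + 1)) / (p : ℝ) ^ (i + 2))) ≤ 1 := by
  -- basic facts about u
  have hu0 : ∀ i, 0 ≤ u i := by
    intro i; rw [hu i]; exact Set.indicator_nonneg (fun _ _ => zero_le_one) i
  have hu1 : ∀ i, u i ≤ 1 := by
    intro i; rw [hu i]
    classical
    by_cases h : i ∈ S <;> simp [Set.indicator_apply, h]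
  have hu1' : u 1 = 1 := by rw [hu 1]; simp [Set.indicator_of_mem h1]
  set f : Nat.Primes → ℝ :=
    fun p => 1 + ∑' i : ℕ, (u (i + 2) - u (i + 1)) / (p : ℝ) ^ (i + 2) with hf
  set g : Nat.Primes → ℝ := fun p => 1 - 1 / (p : ℝ) ^ 2 with hg
  -- bounds on each p
  have key : ∀ p : Nat.Primes, g p ≤ f p ∧ f p ≤ 1 := by
    intro p
    have hp2 : (2 : ℝ) ≤ (p : ℝ) := by exact_mod_cast p.prop.two_le
    have hp0 : (0 : ℝ) < (p : ℝ) := by linarith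
    have hr0 : (0 : ℝ) ≤ 1 / (p : ℝ) := by positivity
    have hr1 : (1 : ℝ) / (p : ℝ) < 1 := by
      rw [div_lt_one hp0]; linarith
    -- geometric bound
    have hterm : ∀ (v : ℝ), 0 ≤ v → v ≤ 1 → ∀ k : ℕ, v / (p : ℝ) ^ k ≤ (1 / (p : ℝ)) ^ k := by
      intro v hv0 hv1 k
      rw [one_div_pow]
      exact (div_le_div_iff_of_pos_right (pow_pos hp0 k)).mpr hv1
    have hgeo : Summable (fun i : ℕ => (1 / (p : ℝ)) ^ (i + 2)) := by
      refine ((summable_geometric_of_lt_one hr0 hr1).mul_left ((1 / (p : ℝ)) ^ 2)).congr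
        (fun i => ?_)
      rw [pow_add]; ring
    have hA : Summable (fun i : ℕ => u (i + 2) / (p : ℝ) ^ (i + 2)) :=
      Summable.of_nonneg_of_le (fun i => div_nonneg (hu0 _) (pow_pos hp0 _).le)
        (fun i => hterm _ (hu0 _) (hu1 _) _) hgeo
    have hB : Summable (fun i : ℕ => u (i + 1) / (p : ℝ) ^ (i + 2)) :=
      Summable.of_nonneg_of_le (fun i => div_nonneg (hu0 _) (pow_pos hp0 _).le)
        (fun i => hterm _ (hu0 _) (hu1 _) _) hgeo
    set A : ℝ := ∑' i : ℕ, u (i + 2) / (p : ℝ) ^ (i + 2) with hAdef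
    have hA0 : 0 ≤ A := tsum_nonneg (fun i => div_nonneg (hu0 _) (pow_pos hp0 _).le)
    -- A ≤ (1/p)^2 / (1 - 1/p)
    have hAle : A ≤ (1 / (p : ℝ)) ^ 2 * (1 - 1 / (p : ℝ))⁻¹ := by
      have h1 : A ≤ ∑' i : ℕ, (1 / (p : ℝ)) ^ (i + 2) :=
        Summable.tsum_le_tsum (fun i => hterm _ (hu0 _) (hu1 _) _) hA hgeo
      have h2 : (∑' i : ℕ, (1 / (p : ℝ)) ^ (i + 2))
          = (1 / (p : ℝ)) ^ 2 * (1 - 1 / (p : ℝ))⁻¹ := by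
        rw [show (fun i : ℕ => (1 / (p : ℝ)) ^ (i + 2))
            = fun i : ℕ => (1 / (p : ℝ)) ^ 2 * (1 / (p : ℝ)) ^ i from
            funext fun i => by rw [pow_add]; ring,
          tsum_mul_left, tsum_geometric_of_lt_one hr0 hr1]
      linarith
    -- B = 1/p^2 + A/p
    have hBeq : (∑' i : ℕ, u (i + 1) / (p : ℝ) ^ (i + 2))
        = 1 / (p : ℝ) ^ 2 + A * (1 / (p : ℝ)) := by
      rw [Summable.tsum_eq_zero_add hB]
      congr 1
      · rw [hu1']
      · rw [← tsum_mul_right]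
        congr 1
        funext i
        rw [show (i + 1 + 2) = (i + 2) + 1 from by ring, pow_succ]
        field_simp
    -- S = A(1 - 1/p) - 1/p^2
    have hS : (∑' i : ℕ, (u (i + 2) - u (i + 1)) / (p : ℝ) ^ (i + 2))
        = A * (1 - 1 / (p : ℝ)) - 1 / (p : ℝ) ^ 2 := by
      have : (fun i : ℕ => (u (i + 2) - u (i + 1)) / (p : ℝ) ^ (i + 2))
          = fun i : ℕ => u (i + 2) / (p : ℝ) ^ (i + 2) - u (i + 1) / (p : ℝ) ^ (i + 2) :=
        funext fun i => sub_div _ _ _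
      rw [this, Summable.tsum_sub hA hB, hBeq]
      ring
    constructor
    · rw [hf, hg]
      simp only [hS]
      have : 0 ≤ A * (1 - 1 / (p : ℝ)) := by
        apply mul_nonneg hA0; rw [sub_nonneg]; linarith
      nlinarith
    · rw [hf]
      simp only [hS]
      have h1p : (0:ℝ) < 1 - 1 / (p : ℝ) := by linarith
      have := mul_le_mul_of_nonneg_right hAle h1p.le
      rw [inv_mul_cancel_right₀ h1p.ne'] at this
      have : A * (1 - 1 / (p : ℝ)) ≤ 1 / (p : ℝ) ^ 2 := by
        calc A * (1 - 1 / (p : ℝ)) ≤ (1 / (p : ℝ)) ^ 2 := this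
          _ = 1 / (p : ℝ) ^ 2 := by rw [div_pow, one_pow]
      linarith
  have hg0 : ∀ p : Nat.Primes, 0 ≤ g p := by
    intro p
    have hp2 : (2 : ℝ) ≤ (p : ℝ) := by exact_mod_cast p.prop.two_le
    have : 1 / (p : ℝ) ^ 2 ≤ 1 / 2 ^ 2 := by
      apply one_div_le_one_div_of_le (by norm_num)
      exact pow_le_pow_left₀ (by norm_num) hp2 2
    rw [hg]; dsimp only; linarith
  have hf0 : ∀ p : Nat.Primes, 0 ≤ f p := fun p => le_trans (hg0 p) (key p).1
  have hf1 : ∀ p : Nat.Primes, f p ≤ 1 := fun p => (key p).2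
  -- partial products of f are antitone
  have hanti : Antitone (fun s : Finset Nat.Primes => ∏ p ∈ s, f p) := by
    intro s t hst
    dsimp only
    rw [← Finset.prod_sdiff hst]
    have h1 : ∏ p ∈ t \ s, f p ≤ 1 :=
      Finset.prod_le_one (fun p _ => hf0 p) (fun p _ => hf1 p)
    have h2 : (0:ℝ) ≤ ∏ p ∈ s, f p := Finset.prod_nonneg (fun p _ => hf0 p)
    nlinarith
  have hbdd : BddBelow (Set.range (fun s : Finset Nat.Primes => ∏ p ∈ s, f p)) := by
    refine ⟨0, ?_⟩
    rintro x ⟨s, rfl⟩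
    exact Finset.prod_nonneg (fun p _ => hf0 p)
  have hmul : HasProd f (⨅ s : Finset Nat.Primes, ∏ p ∈ s, f p) :=
    tendsto_atTop_ciInf hanti hbdd
  have hgf : ∀ s : Finset Nat.Primes, ∏ p ∈ s, g p ≤ ∏ p ∈ s, f p := by
    intro s
    exact Finset.prod_le_prod (fun p _ => hg0 p) (fun p _ => (key p).1)
  have hG : HasProd g (6 / Real.pi ^ 2) := hasProd_one_sub_inv_sq
  have hlow : 6 / Real.pi ^ 2 ≤ ⨅ s : Finset Nat.Primes, ∏ p ∈ s, f p :=
    le_of_tendsto_of_tendsto' hG hmul hgf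
  have hhigh : (⨅ s : Finset Nat.Primes, ∏ p ∈ s, f p) ≤ 1 := by
    refine le_of_tendsto hmul (Filter.Eventually.of_forall fun s => ?_)
    exact Finset.prod_le_one (fun p _ => hf0 p) (fun p _ => hf1 p)
  rw [show (∏' p : Nat.Primes, (1 + ∑' i : ℕ, (u (i + 2) - u (i + 1)) / (p : ℝ) ^ (i + 2)))
      = ∏' p, f p from rfl, hmul.tprod_eq]
  exact ⟨hlow, hhigh⟩
end
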